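/- Stagnation of Taylor transmission conditions without overlap at the shear-wave cutoff (Theorem 3.3, k = ω/Cs): at k = ω/Cs one has λ₁ = 0 and λ₂ = ω√(Cp² − Cs²)/(Cp·Cs) > 0, the matrix entries satisfy b₁₁ = 1 and b₂₁ = 0, the two roots of the quadratic Q₀(z) = z² − (X₀² + 2Y₀)z + Y₀² are exactly 1 and b₂₂², and |b₂₂| = 1; hence both roots have modulus exactly 1 and the non-overlapping method stagnates at this frequency. -/

import Mathlib

noncomputable section

open Complex

/-- `λ₁ = √(k² − ω²/Cs²)`, principal branch of the complex square root. -/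
def lam1 (ω Cs k : ℝ) : ℂ := ((k ^ 2 - ω ^ 2 / Cs ^ 2 : ℝ) : ℂ) ^ ((1 : ℂ) / 2)

/-- `λ₂ = √(k² − ω²/Cp²)`, principal branch of the complex square root. -/
def lam2 (ω Cp k : ℝ) : ℂ := ((k ^ 2 - ω ^ 2 / Cp ^ 2 : ℝ) : ℂ) ^ ((1 : ℂ) / 2)

/-- `Z₁ = Cs³(k² + λ₁²)² + ω²Cp·k²`. -/
def Z1 (ω Cs Cp k : ℝ) : ℂ :=
  (Cs : ℂ) ^ 3 * ((k : ℂ) ^ 2 + (lam1 ω Cs k) ^ 2) ^ 2 + (ω : ℂ) ^ 2 * (Cp : ℂ) * (k : ℂ) ^ 2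

/-- `Z₂ = (4Cs³k² + Cpω²)λ₁λ₂`. -/
def Z2 (ω Cs Cp k : ℝ) : ℂ :=
  (4 * (Cs : ℂ) ^ 3 * (k : ℂ) ^ 2 + (Cp : ℂ) * (ω : ℂ) ^ 2) * lam1 ω Cs k * lam2 ω Cp k

/-- `K = 2k(Cpω² + 2Cs³(k² + λ₁²))`. -/
def Kq (ω Cs Cp k : ℝ) : ℂ :=
  2 * (k : ℂ) * ((Cp : ℂ) * (ω : ℂ) ^ 2 + 2 * (Cs : ℂ) ^ 3 * ((k : ℂ) ^ 2 + (lam1 ω Cs k) ^ 2))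

/-- `D = −Z₁ + Z₂ + iω³(λ₁ + λ₂Cp/Cs)`. -/
def Dq (ω Cs Cp k : ℝ) : ℂ :=
  -Z1 ω Cs Cp k + Z2 ω Cs Cp k +
    Complex.I * (ω : ℂ) ^ 3 * (lam1 ω Cs k + lam2 ω Cp k * (Cp : ℂ) / (Cs : ℂ))

/-- `b₁₁ = (−Z₁ − Z₂ − iω³(λ₁ − λ₂Cp/Cs))/D`. -/
def b11 (ω Cs Cp k : ℝ) : ℂ :=
  (-Z1 ω Cs Cp k - Z2 ω Cs Cp k -
    Complex.I * (ω : ℂ) ^ 3 * (lam1 ω Cs k - lam2 ω Cp k * (Cp : ℂ) / (Cs : ℂ))) / Dq ω Cs Cp k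

/-- `b₁₂ = iλ₂K/D`. -/
def b12 (ω Cs Cp k : ℝ) : ℂ :=
  Complex.I * lam2 ω Cp k * Kq ω Cs Cp k / Dq ω Cs Cp k

/-- `b₂₁ = −iλ₁K/D`. -/
def b21 (ω Cs Cp k : ℝ) : ℂ :=
  -Complex.I * lam1 ω Cs k * Kq ω Cs Cp k / Dq ω Cs Cp k

/-- `b₂₂ = (−Z₁ − Z₂ + iω³(λ₁ − λ₂Cp/Cs))/D`. -/
def b22 (ω Cs Cp k : ℝ) : ℂ :=
  (-Z1 ω Cs Cp k - Z2 ω Cs Cp k +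
    Complex.I * (ω : ℂ) ^ 3 * (lam1 ω Cs k - lam2 ω Cp k * (Cp : ℂ) / (Cs : ℂ))) / Dq ω Cs Cp k

/-- `X_δ = e^{−λ₁δ}b₁₁ − e^{−λ₂δ}b₂₂`. -/
def Xd (ω Cs Cp k δ : ℝ) : ℂ :=
  Complex.exp (-(lam1 ω Cs k) * (δ : ℂ)) * b11 ω Cs Cp k -
    Complex.exp (-(lam2 ω Cp k) * (δ : ℂ)) * b22 ω Cs Cp k

/-- `Y_δ = e^{−(λ₁+λ₂)δ}(b₁₁b₂₂ − b₁₂b₂₁)`. -/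
def Yd (ω Cs Cp k δ : ℝ) : ℂ :=
  Complex.exp (-(lam1 ω Cs k + lam2 ω Cp k) * (δ : ℂ)) *
    (b11 ω Cs Cp k * b22 ω Cs Cp k - b12 ω Cs Cp k * b21 ω Cs Cp k)

/-- The quadratic `Q_δ(z) = z² − (X_δ² + 2Y_δ)z + Y_δ²` whose roots are the eigenvalues `r±`
of the double-iteration operator of the Schwarz method with zeroth-order Taylor
transmission conditions. -/
def Qd (ω Cs Cp k δ : ℝ) (z : ℂ) : ℂ :=
  z ^ 2 - ((Xd ω Cs Cp k δ) ^ 2 + 2 * Yd ω Cs Cp k δ) * z + (Yd ω Cs Cp k δ) ^ 2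

/-! At the shear-wave cutoff `k = ω/Cs` the radicand of `λ₁` vanishes, so `Z₂ = 0`, `b₂₁ = 0`,
and the numerator of `b₁₁` coincides with `D`. Since `λ₂` is then real, the numerator of `b₂₂`
is the complex conjugate of `D`, whence `|b₂₂| = 1`. With `b₁₁ = 1` and `b₂₁ = 0` one gets
`X₀ = 1 − b₂₂` and `Y₀ = b₂₂`, so `Q₀(z) = z² − (1 + b₂₂²) z + b₂₂² = (z − 1)(z − b₂₂²)`. -/

theorem ofReal_cpow_half {x : ℝ} (hx : 0 ≤ x) : (x : ℂ) ^ ((1 : ℂ) / 2) = (Real.sqrt x : ℂ) := by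
  rw [Real.sqrt_eq_rpow, Complex.ofReal_cpow hx]
  push_cast
  ring_nf

theorem sq_sub_mul_add_sq_eq_zero_iff {K : Type*} [Field K] (b z : K) :
    z ^ 2 - ((1 - b) ^ 2 + 2 * b) * z + b ^ 2 = 0 ↔ z = 1 ∨ z = b ^ 2 := by
  have hfactor : z ^ 2 - ((1 - b) ^ 2 + 2 * b) * z + b ^ 2 = (z - 1) * (z - b ^ 2) := by ring
  rw [hfactor, mul_eq_zero, sub_eq_zero, sub_eq_zero]

theorem lam1_div_self (ω Cs : ℝ) : lam1 ω Cs (ω / Cs) = 0 := by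
  simp [lam1, div_pow]

section

variable {ω Cs Cp k : ℝ}

theorem lam2_div_eq_of_le (hω : 0 ≤ ω) (hCs : 0 < Cs) (hCsCp : Cs ≤ Cp) :
    lam2 ω Cp (ω / Cs) = ((ω * Real.sqrt (Cp ^ 2 - Cs ^ 2) / (Cp * Cs) : ℝ) : ℂ) := by
  have hCp : 0 < Cp := hCs.trans_le hCsCp
  have hdiff : 0 ≤ Cp ^ 2 - Cs ^ 2 := by nlinarith
  have hradicand : (ω / Cs) ^ 2 - ω ^ 2 / Cp ^ 2 =
      (ω * Real.sqrt (Cp ^ 2 - Cs ^ 2) / (Cp * Cs)) ^ 2 := by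
    rw [div_pow, div_pow, mul_pow, Real.sq_sqrt hdiff]
    field_simp
  rw [lam2, hradicand, ofReal_cpow_half (sq_nonneg _), Real.sqrt_sq (by positivity)]

theorem b11_eq_one_of_lam1_eq_zero (hl1 : lam1 ω Cs k = 0) (hD : Dq ω Cs Cp k ≠ 0) :
    b11 ω Cs Cp k = 1 := by
  rw [b11, div_eq_one_iff_eq hD, Dq, Z2, hl1]
  ring

theorem b21_eq_zero_of_lam1_eq_zero (hl1 : lam1 ω Cs k = 0) : b21 ω Cs Cp k = 0 := by
  simp [b21, hl1]

theorem b22_eq_conj_Dq_div_Dq {L : ℝ} (hl1 : lam1 ω Cs k = 0) (hl2 : lam2 ω Cp k = L) :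
    b22 ω Cs Cp k = starRingEnd ℂ (Dq ω Cs Cp k) / Dq ω Cs Cp k := by
  rw [b22]
  congr 1
  simp only [Dq, Z1, Z2, hl1, hl2, map_add, map_neg, map_mul, map_pow, map_div₀,
    map_zero, Complex.conj_ofReal, Complex.conj_I, map_ofNat]
  ring

theorem norm_b22_eq_one {L : ℝ} (hl1 : lam1 ω Cs k = 0) (hl2 : lam2 ω Cp k = L)
    (hD : Dq ω Cs Cp k ≠ 0) : ‖b22 ω Cs Cp k‖ = 1 := by
  rw [b22_eq_conj_Dq_div_Dq hl1 hl2, norm_div, Complex.norm_conj,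
    div_self (norm_ne_zero_iff.mpr hD)]

theorem Xd_zero : Xd ω Cs Cp k 0 = b11 ω Cs Cp k - b22 ω Cs Cp k := by
  simp [Xd]

theorem Yd_zero :
    Yd ω Cs Cp k 0 = b11 ω Cs Cp k * b22 ω Cs Cp k - b12 ω Cs Cp k * b21 ω Cs Cp k := by
  simp [Yd]

end

theorem taylor_nonoverlapping_shear_cutoff_stagnation_general
    (ω Cs Cp k : ℝ)
    (hω : 0 < ω) (hCs : 0 < Cs) (hCsCp : Cs < Cp)
    (hk : k = ω / Cs)
    (hD : Dq ω Cs Cp k ≠ 0) :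
    lam1 ω Cs k = 0 ∧
    0 < ω * Real.sqrt (Cp ^ 2 - Cs ^ 2) / (Cp * Cs) ∧
    lam2 ω Cp k = ((ω * Real.sqrt (Cp ^ 2 - Cs ^ 2) / (Cp * Cs) : ℝ) : ℂ) ∧
    b11 ω Cs Cp k = 1 ∧
    b21 ω Cs Cp k = 0 ∧
    (∀ z : ℂ, Qd ω Cs Cp k 0 z = 0 ↔ z = 1 ∨ z = (b22 ω Cs Cp k) ^ 2) ∧
    ‖b22 ω Cs Cp k‖ = 1 := by
  subst hk
  have hCp : 0 < Cp := hCs.trans hCsCp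
  have hl1 := lam1_div_self ω Cs
  have hl2 := lam2_div_eq_of_le hω.le hCs hCsCp.le
  have hL : 0 < ω * Real.sqrt (Cp ^ 2 - Cs ^ 2) / (Cp * Cs) := by
    have : 0 < Cp ^ 2 - Cs ^ 2 := by nlinarith
    positivity
  have hb11 := b11_eq_one_of_lam1_eq_zero (Cp := Cp) hl1 hD
  have hb21 := b21_eq_zero_of_lam1_eq_zero (Cp := Cp) hl1
  refine ⟨hl1, hL, hl2, hb11, hb21, fun z => ?_, norm_b22_eq_one hl1 hl2 hD⟩
  rw [Qd, Xd_zero, Yd_zero, hb11, hb21, one_mul, mul_zero, sub_zero]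
  exact sq_sub_mul_add_sq_eq_zero_iff _ z

/-- **Theorem 3.3, k = ω/Cs**: at the shear-wave cutoff, `λ₁ = 0` and
`λ₂ = ω√(Cp² − Cs²)/(Cp·Cs) > 0`, the matrix entries satisfy `b₁₁ = 1` and `b₂₁ = 0`, the
two roots of `Q₀(z) = z² − (X₀² + 2Y₀)z + Y₀²` are exactly `1` and `b₂₂²`, and `|b₂₂| = 1`;
hence both roots have modulus exactly `1` and the non-overlapping method stagnates. -/
theorem taylor_nonoverlapping_shear_cutoff_stagnation
    (ω Cs Cp k : ℝ)
    (hω : 0 < ω) (hCs : 0 < Cs) (hCsCp : Cs < Cp) (hCp2 : 2 * Cs ^ 2 < Cp ^ 2)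
    (hk : k = ω / Cs)
    (hD : Dq ω Cs Cp k ≠ 0) :
    lam1 ω Cs k = 0 ∧
    0 < ω * Real.sqrt (Cp ^ 2 - Cs ^ 2) / (Cp * Cs) ∧
    lam2 ω Cp k = ((ω * Real.sqrt (Cp ^ 2 - Cs ^ 2) / (Cp * Cs) : ℝ) : ℂ) ∧
    b11 ω Cs Cp k = 1 ∧
    b21 ω Cs Cp k = 0 ∧
    (∀ z : ℂ, Qd ω Cs Cp k 0 z = 0 ↔ z = 1 ∨ z = (b22 ω Cs Cp k) ^ 2) ∧
    ‖b22 ω Cs Cp k‖ = 1 :=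
  taylor_nonoverlapping_shear_cutoff_stagnation_general ω Cs Cp k hω hCs hCsCp hk hD

end
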